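/- Let G be a group, N a central subgroup of G, and σ ≤ τ group topologies on G. Then τ covers σ in the lattice 𝓛_G of group topologies on G if and only if one of the following holds: (a) σ|_N = τ|_N and τ/N covers σ/N in 𝓛_{G/N}; or (b) τ|_N covers σ|_N in 𝓛_N and σ/N = τ/N. -/

import Mathlib

open OrderDual

/-- The lattice `𝓛_G` of all group topologies on `G`, ordered as in the paper:
`τ ≤ σ` iff `σ` is finer than `τ` (so the discrete topology is the top element).
This is the order dual of Mathlib's `GroupTopology G`. -/
abbrev GroupTopLattice (G : Type*) [Group G] : Type _ := (GroupTopology G)ᵒᵈ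

/-- The subspace group topology `τ|_N` on a subgroup `N`, as an element of `𝓛_N`. -/
def restrictTop {G : Type*} [Group G] (τ : GroupTopLattice G) (N : Subgroup G) :
    GroupTopLattice N :=
  toDual <|
    letI := (ofDual τ).toTopologicalSpace
    haveI := (ofDual τ).toIsTopologicalGroup
    ({ toTopologicalSpace := inferInstance, toIsTopologicalGroup := inferInstance } :
      GroupTopology N)

/-- The quotient group topology `τ/N` on `G ⧸ N`, for `N` a normal subgroup,
as an element of `𝓛_{G/N}`. -/
def quotTop {G : Type*} [Group G] (τ : GroupTopLattice G) (N : Subgroup G) [N.Normal] :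
    GroupTopLattice (G ⧸ N) :=
  toDual <|
    letI := (ofDual τ).toTopologicalSpace
    haveI := (ofDual τ).toIsTopologicalGroup
    ({ toTopologicalSpace := inferInstance, toIsTopologicalGroup := inferInstance } :
      GroupTopology (G ⧸ N))

/-!
Restriction to `N` and passage to `G ⧸ N` control the interval `[σ, τ]` of `𝓛_G`. Two comparable
group topologies with the same restriction and the same quotient coincide. A topology `w` between
`σ/N` and `τ/N` is the quotient of `σ ∨ ρ` with `ρ` the pull-back of `w` to `G`, and `σ ∨ ρ`
restricts to `σ|_N`. Since `N` is central, a topology `w` between `σ|_N` and `τ|_N` is the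
restriction of `σ ∨ ρ`, where the neighbourhoods of `1` for `ρ` are the products `V * M` of a
`τ`-neighbourhood `V` and a `w`-neighbourhood `M ⊆ N`. The covering criterion is then a fact about
two monotone maps on a poset with these three properties.

The topological lemmas use Mathlib's order on `GroupTopology`, in which finer topologies are
smaller; `𝓛_G` is its order dual.
-/

open Filter Set

namespace GroupTopology

variable {G H : Type*} [Group G] [Group H]

local notation "𝓝₁[" u "]" => @nhds _ (GroupTopology.toTopologicalSpace u) 1

theorem nhds_one_inf (a b : GroupTopology G) : 𝓝₁[a ⊓ b] = 𝓝₁[a] ⊓ 𝓝₁[b] := by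
  rw [toTopologicalSpace_inf, nhds_inf]

theorem eq_iff_nhds_one_eq {a b : GroupTopology G} : a = b ↔ 𝓝₁[a] = 𝓝₁[b] :=
  ⟨fun h => h ▸ rfl, fun h => toTopologicalSpace_injective <|
    IsTopologicalGroup.ext a.toIsTopologicalGroup b.toIsTopologicalGroup h⟩

theorem le_iff_nhds_one_le {a b : GroupTopology G} : a ≤ b ↔ 𝓝₁[a] ≤ 𝓝₁[b] := by
  rw [← inf_eq_left, eq_iff_nhds_one_eq, nhds_one_inf, inf_eq_left]

def induced (f : G →* H) (u : GroupTopology H) : GroupTopology G where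
  toTopologicalSpace := u.toTopologicalSpace.induced f
  toIsTopologicalGroup :=
    letI := u.toTopologicalSpace
    haveI := u.toIsTopologicalGroup
    topologicalGroup_induced f

theorem nhds_one_induced (f : G →* H) (u : GroupTopology H) :
    𝓝₁[u.induced f] = comap f 𝓝₁[u] := by
  rw [← map_one f]
  exact @nhds_induced _ _ u.toTopologicalSpace f 1

theorem induced_mono (f : G →* H) : Monotone (induced f) := fun _ _ h => by
  rw [le_iff_nhds_one_le, nhds_one_induced, nhds_one_induced]
  exact comap_mono (le_iff_nhds_one_le.1 h)

theorem induced_inf (f : G →* H) (u v : GroupTopology H) :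
    (u ⊓ v).induced f = u.induced f ⊓ v.induced f := by
  rw [eq_iff_nhds_one_eq, nhds_one_inf, nhds_one_induced, nhds_one_induced, nhds_one_induced,
    nhds_one_inf, comap_inf]

theorem induced_induced {K : Type*} [Group K] (f : G →* H) (g : H →* K) (u : GroupTopology K) :
    (u.induced g).induced f = u.induced (g.comp f) := by
  rw [eq_iff_nhds_one_eq, nhds_one_induced, nhds_one_induced, nhds_one_induced, comap_comap]
  rfl

theorem induced_one (u : GroupTopology H) : u.induced (1 : G →* H) = ⊤ := by
  rw [eq_iff_nhds_one_eq, nhds_one_induced, toTopologicalSpace_top, _root_.nhds_top]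
  exact comap_const_of_mem fun _ => @mem_of_mem_nhds _ u.toTopologicalSpace _ _

def quotient (N : Subgroup G) [N.Normal] (u : GroupTopology G) : GroupTopology (G ⧸ N) :=
  letI := u.toTopologicalSpace
  haveI := u.toIsTopologicalGroup
  { toTopologicalSpace := inferInstance, toIsTopologicalGroup := inferInstance }

theorem nhds_one_quotient (N : Subgroup G) [N.Normal] (u : GroupTopology G) :
    𝓝₁[u.quotient N] = map (↑) 𝓝₁[u] :=
  letI := u.toTopologicalSpace
  haveI := u.toIsTopologicalGroup
  QuotientGroup.nhds_eq N 1

theorem quotient_mono (N : Subgroup G) [N.Normal] : Monotone (quotient N) := fun _ _ h => by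
  rw [le_iff_nhds_one_le, nhds_one_quotient, nhds_one_quotient]
  exact map_mono (le_iff_nhds_one_le.1 h)

theorem quotient_le_iff_le_induced (N : Subgroup G) [N.Normal] {u : GroupTopology G}
    {v : GroupTopology (G ⧸ N)} : u.quotient N ≤ v ↔ u ≤ v.induced (QuotientGroup.mk' N) := by
  rw [le_iff_nhds_one_le, le_iff_nhds_one_le, nhds_one_quotient, nhds_one_induced,
    QuotientGroup.coe_mk', map_le_iff_le_comap]

def prod (u : GroupTopology G) (v : GroupTopology H) : GroupTopology (G × H) :=
  letI := u.toTopologicalSpace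
  haveI := u.toIsTopologicalGroup
  letI := v.toTopologicalSpace
  haveI := v.toIsTopologicalGroup
  { toTopologicalSpace := inferInstance, toIsTopologicalGroup := inferInstance }

theorem nhds_one_prod (u : GroupTopology G) (v : GroupTopology H) :
    𝓝₁[u.prod v] = 𝓝₁[u] ×ˢ 𝓝₁[v] :=
  @nhds_prod_eq _ _ u.toTopologicalSpace v.toTopologicalSpace 1 1

noncomputable def mapOfSurjective (f : G →* H) (hf : Function.Surjective f)
    (u : GroupTopology G) : GroupTopology H :=
  (u.quotient f.ker).induced (QuotientGroup.quotientKerEquivOfSurjective f hf).symm.toMonoidHom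

theorem nhds_one_mapOfSurjective (f : G →* H) (hf : Function.Surjective f)
    (u : GroupTopology G) : 𝓝₁[u.mapOfSurjective f hf] = map f 𝓝₁[u] := by
  rw [mapOfSurjective, nhds_one_induced, nhds_one_quotient, MulEquiv.coe_toMonoidHom,
    ← MulEquiv.coe_toEquiv, MulEquiv.toEquiv_symm, comap_equiv_symm, map_map]
  rfl

section Subgroup

variable {N : Subgroup G}

theorem eq_of_le_of_induced_subtype_eq_of_quotient_eq [N.Normal] {t s : GroupTopology G}
    (hts : t ≤ s) (hN : t.induced N.subtype = s.induced N.subtype)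
    (hQ : t.quotient N = s.quotient N) : t = s := by
  refine le_antisymm hts (le_iff_nhds_one_le.2 fun U hU => ?_)
  obtain ⟨U₁, hU₁, hU₁U⟩ : ∃ U₁ ∈ 𝓝₁[t], ∀ u ∈ U₁, ∀ v ∈ U₁, u * v ∈ U :=
    letI := t.toTopologicalSpace
    haveI := t.toIsTopologicalGroup
    exists_nhds_one_split hU
  obtain ⟨V, hV, hVU₁⟩ : ∃ V ∈ 𝓝₁[s], N.subtype ⁻¹' V ⊆ N.subtype ⁻¹' U₁ := by
    have h : N.subtype ⁻¹' U₁ ∈ 𝓝₁[s.induced N.subtype] := by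
      rw [← hN, nhds_one_induced]
      exact preimage_mem_comap hU₁
    rw [nhds_one_induced] at h
    exact mem_comap.1 h
  obtain ⟨V₁, hV₁, hV₁V⟩ : ∃ V₁ ∈ 𝓝₁[s], ∀ v ∈ V₁, ∀ w ∈ V₁, v / w ∈ V :=
    letI := s.toTopologicalSpace
    haveI := s.toIsTopologicalGroup
    exists_nhds_split_inv hV
  -- `(U₁ ∩ V₁) * N` is an `s`-neighbourhood because `t` and `s` agree on `G ⧸ N`
  have hW : (↑) ⁻¹' ((↑) '' (U₁ ∩ V₁) : Set (G ⧸ N)) ∈ 𝓝₁[s] := by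
    have h : ((↑) '' (U₁ ∩ V₁) : Set (G ⧸ N)) ∈ 𝓝₁[t.quotient N] := by
      rw [nhds_one_quotient]
      exact image_mem_map (inter_mem hU₁ (le_iff_nhds_one_le.1 hts hV₁))
    rwa [hQ, nhds_one_quotient] at h
  filter_upwards [hW, hV₁] with x ⟨a, ⟨haU₁, haV₁⟩, hax⟩ hxV₁
  have hxa : x / a ∈ N := by
    rw [div_eq_mul_inv]
    exact Subgroup.Normal.mem_comm inferInstance (QuotientGroup.eq.1 hax)
  simpa using hU₁U _ (hVU₁ (show N.subtype ⟨_, hxa⟩ ∈ V from hV₁V x hxV₁ a haV₁)) a haU₁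

theorem exists_mem_Icc_quotient_eq [N.Normal] {t s : GroupTopology G} (hts : t ≤ s)
    {w : GroupTopology (G ⧸ N)} (hw : w ∈ Icc (t.quotient N) (s.quotient N)) :
    ∃ x ∈ Icc t s, x.induced N.subtype = s.induced N.subtype ∧ x.quotient N = w := by
  refine ⟨s ⊓ w.induced (QuotientGroup.mk' N),
    ⟨le_inf hts ((quotient_le_iff_le_induced N).1 hw.1), inf_le_left⟩, ?_, ?_⟩
  · have hker : (QuotientGroup.mk' N).comp N.subtype = 1 :=
      MonoidHom.ext fun n => (QuotientGroup.eq_one_iff _).2 n.2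
    rw [induced_inf, induced_induced, hker, induced_one, inf_top_eq]
  · rw [eq_iff_nhds_one_eq, nhds_one_quotient, nhds_one_inf, nhds_one_induced,
      QuotientGroup.coe_mk', Filter.push_pull, ← nhds_one_quotient, inf_eq_right]
    exact le_iff_nhds_one_le.1 hw.2

variable (N) in
noncomputable def mulCentral (hc : N ≤ Subgroup.center G) (t : GroupTopology G)
    (w : GroupTopology N) : GroupTopology G :=
  (t.prod w).mapOfSurjective
    ((MonoidHom.id G).noncommCoprod N.subtype fun g n => by
      simpa [Commute, SemiconjBy] using Subgroup.mem_center_iff.1 (hc n.2) g)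
    fun g => ⟨(g, 1), by simp⟩

theorem nhds_one_mulCentral (hc : N ≤ Subgroup.center G) (t : GroupTopology G)
    (w : GroupTopology N) :
    𝓝₁[mulCentral N hc t w] = map (fun p : G × N => p.1 * p.2) (𝓝₁[t] ×ˢ 𝓝₁[w]) :=
  (nhds_one_mapOfSurjective _ _ _).trans (congrArg _ (nhds_one_prod t w))

theorem le_mulCentral (hc : N ≤ Subgroup.center G) (t : GroupTopology G)
    (w : GroupTopology N) : t ≤ mulCentral N hc t w := by
  rw [le_iff_nhds_one_le, nhds_one_mulCentral]
  have h : Tendsto (fun g : G => (g, (1 : N))) 𝓝₁[t] (𝓝₁[t] ×ˢ 𝓝₁[w]) :=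
    tendsto_id.prodMk (@tendsto_const_nhds _ w.toTopologicalSpace _ _ _)
  exact (tendsto_map.comp h).congr fun g => mul_one g

theorem induced_subtype_mulCentral (hc : N ≤ Subgroup.center G) {t : GroupTopology G}
    {w : GroupTopology N} (hw : t.induced N.subtype ≤ w) :
    (mulCentral N hc t w).induced N.subtype = w := by
  refine le_antisymm (le_iff_nhds_one_le.2 fun M hM => ?_) (le_iff_nhds_one_le.2 ?_)
  · obtain ⟨M₁, hM₁, hM₁M⟩ : ∃ M₁ ∈ 𝓝₁[w], ∀ m ∈ M₁, ∀ k ∈ M₁, m * k ∈ M :=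
      letI := w.toTopologicalSpace
      haveI := w.toIsTopologicalGroup
      exists_nhds_one_split hM
    obtain ⟨V, hV, hVM₁⟩ :=
      mem_comap.1 (nhds_one_induced N.subtype t ▸ le_iff_nhds_one_le.1 hw hM₁)
    rw [nhds_one_induced, nhds_one_mulCentral]
    refine mem_comap.2 ⟨_, image_mem_map (prod_mem_prod hV hM₁), ?_⟩
    rintro n ⟨⟨v, k⟩, ⟨hv, hk⟩, hvk⟩
    replace hvk : v * k = n := hvk
    have hnk : n * k⁻¹ ∈ M₁ := hVM₁ (show ((n * k⁻¹ : N) : G) ∈ V by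
      rwa [Subgroup.coe_mul, Subgroup.coe_inv, ← eq_mul_inv_of_mul_eq hvk])
    simpa using hM₁M _ hnk k hk
  · rw [nhds_one_induced, nhds_one_mulCentral, ← map_le_iff_le_comap]
    have h : Tendsto (fun n : N => ((1 : G), n)) 𝓝₁[w] (𝓝₁[t] ×ˢ 𝓝₁[w]) :=
      (@tendsto_const_nhds _ t.toTopologicalSpace _ _ _).prodMk tendsto_id
    exact (tendsto_map.comp h).congr fun n => one_mul (n : G)

theorem exists_mem_Icc_induced_subtype_eq (hc : N ≤ Subgroup.center G) {t s : GroupTopology G}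
    (hts : t ≤ s) {w : GroupTopology N}
    (hw : w ∈ Icc (t.induced N.subtype) (s.induced N.subtype)) :
    ∃ x ∈ Icc t s, x.induced N.subtype = w :=
  ⟨s ⊓ mulCentral N hc t w, ⟨le_inf hts (le_mulCentral hc t w), inf_le_left⟩, by
    rw [induced_inf, induced_subtype_mulCentral hc hw.1, inf_eq_right.2 hw.2]⟩

end Subgroup

end GroupTopology

section CovBy

variable {α β γ : Type*} [PartialOrder α] [PartialOrder β] [PartialOrder γ] {a b : α}
  {f : α → β} {g : α → γ}

theorem CovBy.map_covBy_of_surjOn (h : a ⋖ b) (hlt : f a < f b)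
    (hf : SurjOn f (Icc a b) (Icc (f a) (f b))) : f a ⋖ f b := by
  refine ⟨hlt, fun c hac hcb => ?_⟩
  obtain ⟨x, hx, rfl⟩ := hf ⟨hac.le, hcb.le⟩
  rcases h.eq_or_eq hx.1 hx.2 with rfl | rfl
  exacts [hac.ne rfl, hcb.ne rfl]

theorem covBy_of_map_eq_of_map_covBy (hf : Monotone f) (hg : Monotone g)
    (hinj : ∀ ⦃x y⦄, x ≤ y → f x = f y → g x = g y → x = y) (hab : a ≤ b) (hfab : f a = f b)
    (hgab : g a ⋖ g b) : a ⋖ b := by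
  refine ⟨hab.lt_of_ne fun h => hgab.ne (congrArg g h), fun c hac hcb => ?_⟩
  have hfac : f a = f c := le_antisymm (hf hac.le) (hfab ▸ hf hcb.le)
  rcases hgab.eq_or_eq (hg hac.le) (hg hcb.le) with hgc | hgc
  · exact hac.ne (hinj hac.le hfac hgc.symm)
  · exact hcb.ne (hinj hcb.le (hfac.symm.trans hfab) hgc)

theorem covBy_iff_of_surjOn (hf : Monotone f) (hg : Monotone g)
    (hinj : ∀ ⦃x y⦄, x ≤ y → f x = f y → g x = g y → x = y) (hab : a ≤ b)
    (hfs : SurjOn f (Icc a b) (Icc (f a) (f b)))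
    (hgs : SurjOn g (Icc a b ∩ f ⁻¹' {f a}) (Icc (g a) (g b))) :
    a ⋖ b ↔ (f a = f b ∧ g a ⋖ g b) ∨ (f a ⋖ f b ∧ g a = g b) := by
  refine ⟨fun h => ?_, ?_⟩
  · by_cases hgab : g a = g b
    · have hfab : f a ≠ f b := fun hfab => h.ne (hinj hab hfab hgab)
      exact Or.inr ⟨h.map_covBy_of_surjOn ((hf hab).lt_of_ne hfab) hfs, hgab⟩
    · obtain ⟨x, ⟨hx, hfx⟩, hgx⟩ := hgs ⟨hg hab, le_rfl⟩
      have hfab : f a = f b := by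
        rcases h.eq_or_eq hx.1 hx.2 with rfl | rfl
        exacts [absurd hgx hgab, (show f x = f a from hfx).symm]
      exact Or.inl ⟨hfab, h.map_covBy_of_surjOn ((hg hab).lt_of_ne hgab)
        (hgs.mono inter_subset_left subset_rfl)⟩
  · rintro (⟨hfab, hgab⟩ | ⟨hfab, hgab⟩)
    · exact covBy_of_map_eq_of_map_covBy hf hg hinj hab hfab hgab
    · exact covBy_of_map_eq_of_map_covBy hg hf (fun x y h hg hf => hinj h hf hg) hab hgab hfab

end CovBy

/-- Let `G` be a group, `N` a central subgroup of `G` (a central subgroup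
is automatically normal), and `σ ≤ τ` group topologies on `G`. Then `τ` covers `σ` in
`𝓛_G` if and only if one of the following holds:
(a) `σ|_N = τ|_N` and `τ/N` covers `σ/N` in `𝓛_{G/N}`; or
(b) `τ|_N` covers `σ|_N` in `𝓛_N` and `σ/N = τ/N`. -/
theorem covBy_iff_restrict_quot {G : Type*} [Group G] (N : Subgroup G) [N.Normal]
    (hc : N ≤ Subgroup.center G) (σ τ : GroupTopLattice G) (hle : σ ≤ τ) :
    σ ⋖ τ ↔
      ((restrictTop σ N = restrictTop τ N ∧ quotTop σ N ⋖ quotTop τ N) ∨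
        (restrictTop σ N ⋖ restrictTop τ N ∧ quotTop σ N = quotTop τ N)) := by
  refine covBy_iff_of_surjOn (f := (restrictTop · N)) (g := (quotTop · N))
    (fun _ _ h => GroupTopology.induced_mono N.subtype h)
    (fun _ _ h => GroupTopology.quotient_mono N h)
    (fun x y h hR hQ => (GroupTopology.eq_of_le_of_induced_subtype_eq_of_quotient_eq
      (show ofDual y ≤ ofDual x from h) hR.symm hQ.symm).symm)
    hle ?_ ?_
  · rintro w ⟨hσw, hwτ⟩
    obtain ⟨x, ⟨hτx, hxσ⟩, hx⟩ :=
      GroupTopology.exists_mem_Icc_induced_subtype_eq hc hle ⟨hwτ, hσw⟩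
    exact ⟨toDual x, ⟨hxσ, hτx⟩, hx⟩
  · rintro w ⟨hσw, hwτ⟩
    obtain ⟨x, ⟨hτx, hxσ⟩, hxN, hxQ⟩ := GroupTopology.exists_mem_Icc_quotient_eq hle ⟨hwτ, hσw⟩
    exact ⟨toDual x, ⟨⟨hxσ, hτx⟩, hxN⟩, hxQ⟩
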